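/- Line-of-sight range between a satellite at altitude h and a ground station on the Earth's surface: a point x with ‖x‖ = Rₑ + h and a point y with ‖y‖ = Rₑ have line-of-sight (the open segment between them contains no point of norm < Rₑ) if and only if ‖x − y‖ ≤ √((Rₑ+h)² − Rₑ²), i.e., iff the angle at y between the segment and the local vertical is at most 90 degrees (the satellite is at or above the horizon). -/

import Mathlib

/-!
Parametrize the segment from the station `y` as `y + t • (x - y)`. Then
`‖y + t • v‖² - ‖y‖² = t * (2⟪v, y⟫ + t‖v‖²)`, which is nonnegative for all small `t > 0`
exactly when `⟪v, y⟫ ≥ 0`. Expanding `‖x‖² = ‖(x - y) + y‖²` turns `⟪x - y, y⟫ ≥ 0` into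
`‖x - y‖² ≤ ‖x‖² - ‖y‖²`.
-/

open Filter Set Topology RealInnerProductSpace

theorem nonneg_of_forall_mem_Ioo_nonneg_add_mul {a b : ℝ}
    (h : ∀ t ∈ Ioo (0 : ℝ) 1, 0 ≤ a + t * b) : 0 ≤ a := by
  have hlim : Tendsto (fun t : ℝ => a + t * b) (𝓝[>] 0) (𝓝 a) := by
    have hcont : Continuous fun t : ℝ => a + t * b := by fun_prop
    simpa using (hcont.tendsto 0).mono_left nhdsWithin_le_nhds
  exact ge_of_tendsto hlim (eventually_of_mem (Ioo_mem_nhdsGT one_pos) h)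

variable {E : Type*} [NormedAddCommGroup E] [InnerProductSpace ℝ E]

theorem norm_add_smul_sq (y v : E) (t : ℝ) :
    ‖y + t • v‖ ^ 2 = ‖y‖ ^ 2 + t * (2 * ⟪v, y⟫ + t * ‖v‖ ^ 2) := by
  rw [norm_add_sq_real, real_inner_smul_right, norm_smul, mul_pow, Real.norm_eq_abs, sq_abs,
    real_inner_comm]
  ring

theorem forall_mem_Ioo_norm_le_norm_add_smul_iff (y v : E) :
    (∀ t ∈ Ioo (0 : ℝ) 1, ‖y‖ ≤ ‖y + t • v‖) ↔ 0 ≤ ⟪v, y⟫ := by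
  have key : ∀ t, 0 < t → (‖y‖ ≤ ‖y + t • v‖ ↔ 0 ≤ 2 * ⟪v, y⟫ + t * ‖v‖ ^ 2) := fun t ht => by
    rw [← sq_le_sq₀ (norm_nonneg _) (norm_nonneg _), norm_add_smul_sq, le_add_iff_nonneg_right,
      mul_nonneg_iff_of_pos_left ht]
  constructor
  · intro h
    have := nonneg_of_forall_mem_Ioo_nonneg_add_mul fun t ht => (key t ht.1).1 (h t ht)
    linarith
  · intro h t ht
    exact (key t ht.1).2 (by linarith [mul_nonneg ht.1.le (sq_nonneg ‖v‖)])

theorem forall_mem_Ioo_norm_le_norm_smul_add_smul_iff (x y : E) :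
    (∀ lam ∈ Ioo (0 : ℝ) 1, ‖y‖ ≤ ‖(1 - lam) • x + lam • y‖) ↔ 0 ≤ ⟪x - y, y⟫ := by
  rw [← forall_mem_Ioo_norm_le_norm_add_smul_iff]
  have hseg : ∀ lam : ℝ, (1 - lam) • x + lam • y = y + (1 - lam) • (x - y) := fun lam => by
    rw [smul_sub, sub_smul 1 lam y, one_smul]; abel
  simp only [hseg]
  constructor
  · intro h t ht
    simpa using h (1 - t) ⟨by linarith [ht.2], by linarith [ht.1]⟩
  · intro h lam hlam
    exact h (1 - lam) ⟨by linarith [hlam.2], by linarith [hlam.1]⟩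

theorem real_inner_sub_nonneg_iff (x y : E) :
    0 ≤ ⟪x - y, y⟫ ↔ ‖x - y‖ ^ 2 ≤ ‖x‖ ^ 2 - ‖y‖ ^ 2 := by
  have h := norm_add_sq_real (x - y) y
  rw [sub_add_cancel] at h
  constructor <;> intro <;> linarith

theorem stmt15_general (Re h : ℝ)
    (x y : EuclideanSpace ℝ (Fin 3))
    (hx : ‖x‖ = Re + h) (hy : ‖y‖ = Re) :
    ((∀ lam ∈ Set.Ioo (0 : ℝ) 1, Re ≤ ‖(1 - lam) • x + lam • y‖) ↔
      0 ≤ (inner ℝ (x - y) y : ℝ)) ∧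
    ((0 ≤ (inner ℝ (x - y) y : ℝ)) ↔ ‖x - y‖ ^ 2 ≤ (Re + h) ^ 2 - Re ^ 2) := by
  rw [← hx, ← hy]
  exact ⟨forall_mem_Ioo_norm_le_norm_smul_add_smul_iff x y, real_inner_sub_nonneg_iff x y⟩

/-- Line-of-sight between a satellite at altitude `h` and a ground station on the
surface: the open segment avoids the open ball of radius `Re` iff `⟨x − y, y⟩ ≥ 0`
(satellite at or above the horizon), iff `‖x − y‖² ≤ (Re+h)² − Re²`. -/
theorem stmt15 (Re h : ℝ) (hRe : 0 < Re) (hh : 0 < h)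
    (x y : EuclideanSpace ℝ (Fin 3))
    (hx : ‖x‖ = Re + h) (hy : ‖y‖ = Re) :
    ((∀ lam ∈ Set.Ioo (0 : ℝ) 1, Re ≤ ‖(1 - lam) • x + lam • y‖) ↔
      0 ≤ (inner ℝ (x - y) y : ℝ)) ∧
    ((0 ≤ (inner ℝ (x - y) y : ℝ)) ↔ ‖x - y‖ ^ 2 ≤ (Re + h) ^ 2 - Re ^ 2) :=
  stmt15_general Re h x y hx hy
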